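/- Let f be a monic polynomial with coefficients in a field K. The symmetric group S_n (acting on the splitting algebra K_f by permuting the universal roots) acts transitively on the set of maximal ideals of K_f. -/

import Mathlib

open MvPolynomial Polynomial

/-- The ideal `(s₁ - f₁, ..., sₙ - fₙ)` defining the splitting algebra, where
`fᵢ = (-1)^i · coeff f (n - i)` are the signed coefficients of `f`. -/
noncomputable def splittingIdeal (A : Type*) [CommRing A] (f : Polynomial A) (n : ℕ) :
    Ideal (MvPolynomial (Fin n) A) :=
  Ideal.span (Set.range fun i : Fin n =>
    esymm (Fin n) A ((i : ℕ) + 1) -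
      MvPolynomial.C ((-1 : A) ^ ((i : ℕ) + 1) * f.coeff (n - ((i : ℕ) + 1))))

/-- The splitting algebra `A_f = A[t₁,...,tₙ]/(s₁ - f₁, ..., sₙ - fₙ)`. -/
noncomputable def SplittingAlgebra (A : Type*) [CommRing A] (f : Polynomial A) (n : ℕ) :=
  MvPolynomial (Fin n) A ⧸ splittingIdeal A f n

noncomputable instance (A : Type*) [CommRing A] (f : Polynomial A) (n : ℕ) :
    CommRing (SplittingAlgebra A f n) := Ideal.Quotient.commRing _

noncomputable instance (R A : Type*) [CommSemiring R] [CommRing A] [Algebra R A]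
    (f : Polynomial A) (n : ℕ) : Algebra R (SplittingAlgebra A f n) :=
  Ideal.Quotient.algebra R

/-- The universal roots `τᵢ` of `f` in the splitting algebra. -/
noncomputable def univRoot (A : Type*) [CommRing A] (f : Polynomial A) (n : ℕ) (i : Fin n) :
    SplittingAlgebra A f n :=
  Ideal.Quotient.mk (splittingIdeal A f n) (MvPolynomial.X i)

/-- The action of a permutation `σ` on the splitting algebra, sending `τᵢ` to `τ_{σ⁻¹ i}`. -/
noncomputable def permHom (A : Type*) [CommRing A] (f : Polynomial A) (n : ℕ)
    (σ : Equiv.Perm (Fin n)) : SplittingAlgebra A f n →ₐ[A] SplittingAlgebra A f n :=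
  Ideal.Quotient.liftₐ (splittingIdeal A f n)
    ((Ideal.Quotient.mkₐ A (splittingIdeal A f n)).comp
      (rename (σ.symm : Fin n → Fin n)))
    (by
      intro a ha
      have h : splittingIdeal A f n ≤ RingHom.ker
          ((Ideal.Quotient.mkₐ A (splittingIdeal A f n)).comp
            (rename (σ.symm : Fin n → Fin n))) := by
        rw [splittingIdeal, Ideal.span_le]
        rintro _ ⟨i, rfl⟩
        have : (rename (σ.symm : Fin n → Fin n))
            (esymm (Fin n) A ((i : ℕ) + 1) -
              MvPolynomial.C ((-1 : A) ^ ((i : ℕ) + 1) * f.coeff (n - ((i : ℕ) + 1)))) =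
            esymm (Fin n) A ((i : ℕ) + 1) -
              MvPolynomial.C ((-1 : A) ^ ((i : ℕ) + 1) * f.coeff (n - ((i : ℕ) + 1))) := by
          rw [map_sub, rename_esymm, rename_C]
        simp only [SetLike.mem_coe, RingHom.mem_ker, AlgHom.coe_comp, Function.comp_apply, this]
        rw [Ideal.Quotient.mkₐ_eq_mk, Ideal.Quotient.eq_zero_iff_mem]
        exact Ideal.subset_span ⟨i, rfl⟩
      exact h ha)

/-! Since `f = ∏ (X - τᵢ)` in `K_f`, every `τᵢ` is integral over `K`, hence so is `K_f`, and every
maximal ideal of `K_f` is the kernel of a `K`-algebra map `K_f → K̄`. Such a map sends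
`(τ₁, …, τₙ)` to an enumeration of the roots of `f` in `K̄` counted with multiplicity, so any two
of them differ by a permutation of the `τᵢ`. -/

theorem Fintype.exists_perm_comp_eq_of_map_univ_val_eq {α β : Type*} [Fintype α] {g g' : α → β}
    (h : Finset.univ.val.map g = Finset.univ.val.map g') : ∃ σ : Equiv.Perm α, g ∘ σ = g' := by
  classical
  have hfiber (b : β) : Fintype.card {a // g' a = b} = Fintype.card {a // g a = b} := by
    have := congrArg (Multiset.count b) h.symm
    simp only [Multiset.count_map, eq_comm (a := b)] at this
    rwa [Fintype.card_subtype, Fintype.card_subtype]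
  exact ⟨Equiv.ofFiberEquiv fun b => Fintype.equivOfCardEq (hfiber b),
    funext (Equiv.ofFiberEquiv_map _)⟩

namespace SplittingAlgebra

variable {A : Type*} [CommRing A] {f : Polynomial A} {n : ℕ}

theorem aeval_univRoot (p : MvPolynomial (Fin n) A) :
    aeval (univRoot A f n) p = Ideal.Quotient.mk (splittingIdeal A f n) p :=
  (MvPolynomial.aeval_unique (Ideal.Quotient.mkₐ A (splittingIdeal A f n))).symm ▸ rfl

theorem algHom_ext {B : Type*} [Semiring B] [Algebra A B]
    {φ ψ : SplittingAlgebra A f n →ₐ[A] B}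
    (h : ∀ i, φ (univRoot A f n i) = ψ (univRoot A f n i)) : φ = ψ :=
  Ideal.Quotient.algHom_ext A (MvPolynomial.algHom_ext h)

theorem adjoin_range_univRoot : Algebra.adjoin A (Set.range (univRoot A f n)) = ⊤ := by
  rw [Algebra.adjoin_range_eq_range_aeval, AlgHom.range_eq_top]
  intro x
  obtain ⟨p, rfl⟩ := Ideal.Quotient.mk_surjective x
  exact ⟨p, aeval_univRoot p⟩

theorem permHom_univRoot (σ : Equiv.Perm (Fin n)) (i : Fin n) :
    permHom A f n σ (univRoot A f n i) = univRoot A f n (σ.symm i) :=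
  congrArg (Ideal.Quotient.mk _) (rename_X _ _)

theorem esymm_univRoot (hmonic : f.Monic) (hdeg : f.natDegree = n) {j : ℕ} (hj : j ≤ n) :
    (Finset.univ.val.map (univRoot A f n)).esymm j =
      algebraMap A _ ((-1) ^ j * f.coeff (n - j)) := by
  rw [← MvPolynomial.aeval_esymm_eq_multiset_esymm (Fin n) A]
  rcases j with _ | j
  · simp [MvPolynomial.esymm_zero, ← hdeg, hmonic.coeff_natDegree]
  rw [aeval_univRoot]
  exact (Ideal.Quotient.mk_eq_mk_iff_sub_mem _ _).2 (Ideal.subset_span ⟨⟨j, hj⟩, rfl⟩)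

theorem prod_X_sub_C_univRoot (hmonic : f.Monic) (hdeg : f.natDegree = n) :
    ∏ i, (Polynomial.X - Polynomial.C (univRoot A f n i)) =
      f.map (algebraMap A (SplittingAlgebra A f n)) := by
  have hcard : Multiset.card (Finset.univ.val.map (univRoot A f n)) = n := by simp
  refine (ext_iff_natDegree_le (n := n) ?_ (natDegree_map_le.trans hdeg.le)).2 fun k hk => ?_
  · refine (natDegree_prod_le _ _).trans ?_
    exact (Finset.sum_le_card_nsmul _ _ 1 fun i _ => natDegree_X_sub_C_le _).trans (by simp)
  have hvieta := Multiset.prod_X_sub_C_coeff (Finset.univ.val.map (univRoot A f n)) (hcard ▸ hk)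
  simp only [Multiset.map_map, Function.comp_def] at hvieta
  rw [Finset.prod_eq_multiset_prod, hvieta, hcard, esymm_univRoot hmonic hdeg (Nat.sub_le n k),
    Polynomial.coeff_map, Nat.sub_sub_self hk, map_mul, ← mul_assoc, map_pow, map_neg, map_one,
    ← pow_add, Even.neg_one_pow ⟨_, rfl⟩, one_mul]

theorem isIntegral_univRoot (hmonic : f.Monic) (hdeg : f.natDegree = n) (i : Fin n) :
    IsIntegral A (univRoot A f n i) := by
  refine ⟨f, hmonic, ?_⟩
  rw [← Polynomial.eval_map, ← prod_X_sub_C_univRoot hmonic hdeg, Polynomial.eval_prod]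
  exact Finset.prod_eq_zero (Finset.mem_univ i) (by simp)

theorem isIntegral (hmonic : f.Monic) (hdeg : f.natDegree = n) :
    Algebra.IsIntegral A (SplittingAlgebra A f n) := by
  rw [← integralClosure_eq_top_iff, eq_top_iff, ← adjoin_range_univRoot]
  exact Algebra.adjoin_le (Set.range_subset_iff.2 (isIntegral_univRoot hmonic hdeg))

theorem roots_map_eq_map_univRoot (hmonic : f.Monic) (hdeg : f.natDegree = n)
    {L : Type*} [CommRing L] [IsDomain L] [Algebra A L] (φ : SplittingAlgebra A f n →ₐ[A] L) :
    (f.map (algebraMap A L)).roots = Finset.univ.val.map (φ ∘ univRoot A f n) := by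
  rw [← φ.comp_algebraMap, ← Polynomial.map_map, ← prod_X_sub_C_univRoot hmonic hdeg,
    Polynomial.map_prod, Finset.prod_eq_multiset_prod]
  have := roots_multiset_prod_X_sub_C (Finset.univ.val.map (φ ∘ univRoot A f n))
  simpa only [Multiset.map_map, Function.comp_def, Polynomial.map_sub, Polynomial.map_X,
    Polynomial.map_C, RingHom.coe_coe] using this

theorem exists_perm_comp_permHom_eq (hmonic : f.Monic) (hdeg : f.natDegree = n)
    {L : Type*} [CommRing L] [IsDomain L] [Algebra A L] (φ φ' : SplittingAlgebra A f n →ₐ[A] L) :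
    ∃ σ : Equiv.Perm (Fin n), φ.comp (permHom A f n σ) = φ' := by
  obtain ⟨σ, hσ⟩ := Fintype.exists_perm_comp_eq_of_map_univ_val_eq <|
    (roots_map_eq_map_univRoot hmonic hdeg φ).symm.trans (roots_map_eq_map_univRoot hmonic hdeg φ')
  refine ⟨σ.symm, algHom_ext fun i => ?_⟩
  simpa [permHom_univRoot] using congrFun hσ i

end SplittingAlgebra

theorem Ideal.IsMaximal.exists_algHom_algebraicClosure_ker_eq {K B : Type*} [Field K]
    [CommRing B] [Algebra K B] [Algebra.IsIntegral K B] {M : Ideal B} (hM : M.IsMaximal) :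
    ∃ φ : B →ₐ[K] AlgebraicClosure K, RingHom.ker φ = M := by
  let := Ideal.Quotient.field M
  let ι : B ⧸ M →ₐ[K] AlgebraicClosure K := IsAlgClosed.lift
  refine ⟨ι.comp (Ideal.Quotient.mkₐ K M), ?_⟩
  ext x
  rw [RingHom.mem_ker, AlgHom.comp_apply, map_eq_zero_iff ι ι.toRingHom.injective,
    Ideal.Quotient.mkₐ_eq_mk, Ideal.Quotient.eq_zero_iff_mem]

/-- For a monic polynomial `f` over a field `K`, the symmetric group `Sₙ` acts transitively
on the maximal ideals of the splitting algebra `K_f`. -/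
theorem symmetricGroup_transitive_on_maximalIdeals {K : Type*} [Field K]
    (f : Polynomial K) (n : ℕ) (hmonic : f.Monic) (hdeg : f.natDegree = n) :
    ∀ M M' : Ideal (SplittingAlgebra K f n), M.IsMaximal → M'.IsMaximal →
      ∃ σ : Equiv.Perm (Fin n), Ideal.comap (permHom K f n σ) M = M' := by
  intro M M' hM hM'
  have := SplittingAlgebra.isIntegral hmonic hdeg
  obtain ⟨φ, rfl⟩ := hM.exists_algHom_algebraicClosure_ker_eq (K := K)
  obtain ⟨φ', rfl⟩ := hM'.exists_algHom_algebraicClosure_ker_eq (K := K)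
  obtain ⟨σ, hσ⟩ := SplittingAlgebra.exists_perm_comp_permHom_eq hmonic hdeg φ φ'
  exact ⟨σ, by rw [← hσ]; rfl⟩
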